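/- Let Φ be an injective *-endomorphism of a C*-algebra A. Then either Φ is surjective (hence a *-automorphism) and σ(Φ) ⊂ 𝕋, or Φ is not surjective and σ(Φ) = 𝔻, the full closed unit disk. -/

import Mathlib

/-!
An injective *-endomorphism of a C*-algebra is isometric, so it suffices to study an isometry `T`
of a Banach space. Since `‖T‖ ≤ 1`, its spectrum lies in the closed unit disk. If `T` is also
surjective, `T⁻¹` is an isometry as well and `λ ∈ σ(T)` gives `λ⁻¹ ∈ σ(T⁻¹)`, so `|λ| = 1`.

For `|μ| < 1` the operator `μ - T` is bounded below by `1 - |μ|`; when it is invertible its inverse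
therefore has norm at most `(1 - |μ|)⁻¹`, so the whole disk of radius `1 - |μ|` around `μ` lies in
the resolvent set. Hence the spectrum meets the open unit disk in a relatively clopen set. If `T` is
not surjective this set contains `0`, so by connectedness it is the whole open disk, and the
spectrum, being closed, is the closed disk.
-/

open Metric

section BanachAlgebra

variable {𝕜 A : Type*} [NormedField 𝕜] [NormedRing A] [NormedAlgebra 𝕜 A] [CompleteSpace A]
  [NormOneClass A]

theorem spectrum_subset_sphere_of_norm_le_one (u : Aˣ) (hu : ‖(u : A)‖ ≤ 1)
    (hu_inv : ‖(↑u⁻¹ : A)‖ ≤ 1) : spectrum 𝕜 (u : A) ⊆ sphere 0 1 := by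
  intro k hk
  have hk0 : k ≠ 0 := spectrum.ne_zero_of_mem_of_unit hk
  have hk_inv : k⁻¹ ∈ spectrum 𝕜 (↑u⁻¹ : A) := by
    rwa [← inv_inv u, ← spectrum.map_inv, Set.mem_inv] at hk
  have h₁ : ‖k‖ ≤ 1 := (spectrum.norm_le_norm_of_mem hk).trans hu
  have h₂ : ‖k‖⁻¹ ≤ 1 := norm_inv k ▸ (spectrum.norm_le_norm_of_mem hk_inv).trans hu_inv
  exact mem_sphere_zero_iff_norm.mpr (le_antisymm h₁ ((inv_le_one₀ (norm_pos_iff.mpr hk0)).mp h₂))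

theorem ball_subset_resolventSet {a : A} {k : 𝕜} (u : Aˣ) (hu : (u : A) = algebraMap 𝕜 A k - a) :
    ball k ‖(↑u⁻¹ : A)‖⁻¹ ⊆ resolventSet 𝕜 a := by
  intro μ hμ
  rw [mem_ball, dist_eq_norm, ← norm_algebraMap' A] at hμ
  have := (u.add _ hμ).isUnit
  rwa [Units.val_add, hu, map_sub, sub_add_sub_cancel'] at this

end BanachAlgebra

theorem ContinuousLinearMap.norm_units_inv_le {𝕜 E : Type*} [NontriviallyNormedField 𝕜]
    [NormedAddCommGroup E] [NormedSpace 𝕜 E] (u : (E →L[𝕜] E)ˣ) {c : ℝ} (hc : 0 < c)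
    (h : ∀ x, c * ‖x‖ ≤ ‖(u : E →L[𝕜] E) x‖) : ‖(↑u⁻¹ : E →L[𝕜] E)‖ ≤ c⁻¹ := by
  refine ContinuousLinearMap.opNorm_le_bound _ (by positivity) fun y => ?_
  have hy : (u : E →L[𝕜] E) ((↑u⁻¹ : E →L[𝕜] E) y) = y := DFunLike.congr_fun u.mul_inv y
  rw [inv_mul_eq_div, le_div_iff₀ hc, mul_comm]
  simpa only [hy] using h ((↑u⁻¹ : E →L[𝕜] E) y)

section Isometry

variable {𝕜 E : Type*} [NontriviallyNormedField 𝕜] [NormedAddCommGroup E] [NormedSpace 𝕜 E]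
  {T : E →L[𝕜] E}

theorem spectrum_subset_closedBall_of_norm_map [CompleteSpace E] (hT : ∀ x, ‖T x‖ = ‖x‖) :
    spectrum 𝕜 T ⊆ closedBall 0 1 := by
  nontriviality E
  exact (spectrum.subset_closedBall_norm T).trans <| closedBall_subset_closedBall
    (LinearIsometry.norm_toContinuousLinearMap_le ⟨T.toLinearMap, hT⟩)

theorem spectrum_subset_sphere_of_norm_map_of_surjective [CompleteSpace E]
    (hT : ∀ x, ‖T x‖ = ‖x‖) (hsurj : Function.Surjective T) : spectrum 𝕜 T ⊆ sphere 0 1 := by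
  nontriviality E
  let e : E ≃ₗᵢ[𝕜] E := LinearIsometryEquiv.ofSurjective ⟨T.toLinearMap, hT⟩ hsurj
  exact spectrum_subset_sphere_of_norm_le_one
    ((ContinuousLinearEquiv.unitsEquiv 𝕜 E).symm e.toContinuousLinearEquiv)
    e.toLinearIsometry.norm_toContinuousLinearMap_le
    e.symm.toLinearIsometry.norm_toContinuousLinearMap_le

theorem mul_norm_le_norm_algebraMap_sub_apply (hT : ∀ x, ‖T x‖ = ‖x‖) (μ : 𝕜) (x : E) :
    (1 - ‖μ‖) * ‖x‖ ≤ ‖(algebraMap 𝕜 (E →L[𝕜] E) μ - T) x‖ := by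
  have hx : (algebraMap 𝕜 (E →L[𝕜] E) μ - T) x = μ • x - T x := rfl
  rw [hx, norm_sub_rev]
  calc (1 - ‖μ‖) * ‖x‖ = ‖T x‖ - ‖μ • x‖ := by rw [hT, norm_smul]; ring
    _ ≤ ‖T x - μ • x‖ := norm_sub_norm_le _ _

theorem ball_subset_resolventSet_of_norm_map [CompleteSpace E] (hT : ∀ x, ‖T x‖ = ‖x‖) {μ : 𝕜}
    (hμ : ‖μ‖ < 1) (hμT : μ ∈ resolventSet 𝕜 T) : ball μ (1 - ‖μ‖) ⊆ resolventSet 𝕜 T := by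
  nontriviality E
  obtain ⟨u, hu⟩ := hμT
  refine (ball_subset_ball ?_).trans (ball_subset_resolventSet u hu)
  rw [le_inv_comm₀ (by linarith) (Units.norm_pos u⁻¹)]
  exact ContinuousLinearMap.norm_units_inv_le u (by linarith)
    (hu ▸ mul_norm_le_norm_algebraMap_sub_apply hT μ)

theorem ball_subset_spectrum_of_norm_map [NormedSpace ℝ 𝕜] [CompleteSpace E]
    (hT : ∀ x, ‖T x‖ = ‖x‖) (h0 : (0 : 𝕜) ∈ spectrum 𝕜 T) : ball 0 1 ⊆ spectrum 𝕜 T := by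
  have hint : ball 0 1 ∩ spectrum 𝕜 T ⊆ interior (spectrum 𝕜 T) := by
    rintro μ ⟨hμ, hμT⟩
    rw [mem_ball_zero_iff] at hμ
    refine mem_interior.mpr
      ⟨ball μ ((1 - ‖μ‖) / 2), fun ν hν hνT => hμT ?_, isOpen_ball, mem_ball_self (by linarith)⟩
    rw [mem_ball, dist_eq_norm] at hν
    have hν_le : ‖ν‖ ≤ ‖μ‖ + ‖ν - μ‖ := norm_le_norm_add_norm_sub' ν μ
    refine ball_subset_resolventSet_of_norm_map hT (by linarith) hνT ?_
    rw [mem_ball, dist_eq_norm, norm_sub_rev]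
    linarith
  have hcover : ball 0 1 ⊆ interior (spectrum 𝕜 T) ∪ resolventSet 𝕜 T := fun μ hμ =>
    (em (μ ∈ spectrum 𝕜 T)).imp (fun hμT => hint ⟨hμ, hμT⟩) not_not.mp
  have hdisj : Disjoint (interior (spectrum 𝕜 T)) (resolventSet 𝕜 T) :=
    Set.disjoint_left.mpr fun _ hμ => interior_subset hμ
  refine ((convex_ball (0 : 𝕜) 1).isPreconnected.subset_left_of_subset_union isOpen_interior
    (spectrum.isOpen_resolventSet T) hdisj hcover ?_).trans interior_subset
  exact ⟨0, mem_ball_self one_pos, hint ⟨mem_ball_self one_pos, h0⟩⟩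

theorem spectrum_eq_closedBall_of_norm_map_of_not_surjective [NormedSpace ℝ 𝕜] [CompleteSpace E]
    (hT : ∀ x, ‖T x‖ = ‖x‖) (hsurj : ¬Function.Surjective T) :
    spectrum 𝕜 T = closedBall 0 1 := by
  have h0 : (0 : 𝕜) ∈ spectrum 𝕜 T := (spectrum.zero_mem_iff 𝕜).mpr fun hunit =>
    hsurj (ContinuousLinearEquiv.unitsEquiv 𝕜 E hunit.unit).surjective
  refine (spectrum_subset_closedBall_of_norm_map hT).antisymm ?_
  rw [← closure_ball (0 : 𝕜) one_ne_zero]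
  exact (spectrum.isClosed T).closure_subset_iff.mpr (ball_subset_spectrum_of_norm_map hT h0)

end Isometry

theorem stmt_6_general {A : Type*} [NormedRing A] [StarRing A] [CStarRing A] [NormedAlgebra ℂ A]
    [CompleteSpace A] [StarModule ℂ A]
    (Φ : A →L[ℂ] A)
    (hmul : ∀ a b : A, Φ (a * b) = Φ a * Φ b)
    (hstar : ∀ a : A, Φ (star a) = star (Φ a))
    (hinj : Function.Injective Φ) :
    (Function.Surjective Φ → spectrum ℂ Φ ⊆ Metric.sphere (0 : ℂ) 1) ∧
    (¬ Function.Surjective Φ → spectrum ℂ Φ = Metric.closedBall (0 : ℂ) 1) := by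
  let _ : CStarAlgebra A := ⟨⟩
  let φ : A →⋆ₙₐ[ℂ] A :=
    { Φ.toLinearMap with map_zero' := Φ.map_zero, map_mul' := hmul, map_star' := hstar }
  have hΦ : ∀ a, ‖Φ a‖ = ‖a‖ := NonUnitalStarAlgHom.norm_map φ hinj
  exact ⟨spectrum_subset_sphere_of_norm_map_of_surjective hΦ,
    spectrum_eq_closedBall_of_norm_map_of_not_surjective hΦ⟩

/-- For an injective *-endomorphism `Φ` of a C*-algebra `A`, either `Φ` is
surjective and `σ(Φ) ⊆ 𝕋`, or `Φ` is not surjective and `σ(Φ) = 𝔻`. -/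
theorem stmt_6 {A : Type*} [NormedRing A] [StarRing A] [CStarRing A] [NormedAlgebra ℂ A]
    [CompleteSpace A] [StarModule ℂ A] [Nontrivial A]
    (Φ : A →L[ℂ] A)
    (hmul : ∀ a b : A, Φ (a * b) = Φ a * Φ b)
    (hstar : ∀ a : A, Φ (star a) = star (Φ a))
    (hinj : Function.Injective Φ) :
    (Function.Surjective Φ → spectrum ℂ Φ ⊆ Metric.sphere (0 : ℂ) 1) ∧
    (¬ Function.Surjective Φ → spectrum ℂ Φ = Metric.closedBall (0 : ℂ) 1) :=
  stmt_6_general Φ hmul hstar hinj
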